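/- The Danos–Regnier 4-ary non-decomposable connective is a dual pair: let P = {{(1,2),(3,4)}, {(1,3),(2,4)}} and Q = {{(1,4),(2),(3)}, {(2,3),(1),(4)}} be partition sets of {1,2,3,4}. Then every p ∈ P is orthogonal to every q ∈ Q (i.e., P ⊥ Q), and moreover P^⊥ = Q and Q^⊥ = P, so (P, Q) forms a pair of 4-ary generalized connectives (C, C*). -/

import Mathlib

/-! ## Partitions of `{1,…,n}`, meeting graphs, orthogonality (Danos–Regnier) -/

/-- A partition of `{1,…,n}`, represented as a `Finpartition` of `Fin n`. -/
abbrev PartitionN (n : ℕ) := Finpartition (Finset.univ : Finset (Fin n))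

/-- The (simple graph underlying the) meeting graph `G(p,q)` of two partitions of `{1,…,n}`:
its vertices are the classes of `p` together with the classes of `q`, and a class of `p` is
adjacent to a class of `q` iff some `i ∈ {1,…,n}` belongs to both (in the meeting multigraph
there is one edge for each such `i`). -/
def meetingGraph {n : ℕ} (p q : PartitionN n) :
    SimpleGraph ({c // c ∈ p.parts} ⊕ {d // d ∈ q.parts}) :=
  SimpleGraph.fromRel fun a b =>
    ∃ (c : {c // c ∈ p.parts}) (d : {d // d ∈ q.parts}),
      ((c : Finset (Fin n)) ∩ (d : Finset (Fin n))).Nonempty ∧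
      a = Sum.inl c ∧ b = Sum.inr d

/-- `p ⊥ q` : the meeting multigraph `G(p,q)` is connected and acyclic.  The meeting
multigraph has exactly `n` edges (one per element of `{1,…,n}`), and a connected multigraph
is acyclic iff its number of edges is exactly one less than its number of vertices; so
`G(p,q)` is connected and acyclic iff it is connected (equivalently, the underlying simple
graph is connected) and `n + 1 = (#classes of p) + (#classes of q)`. -/
def Finpartition.Orthogonal {n : ℕ} (p q : PartitionN n) : Prop :=
  (meetingGraph p q).Connected ∧ n + 1 = p.parts.card + q.parts.card

/-- Orthogonality of two partition sets: `P ⊥ Q` iff `p ⊥ q` for all `p ∈ P`, `q ∈ Q`. -/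
def orthSet {n : ℕ} (P Q : Set (PartitionN n)) : Prop :=
  ∀ p ∈ P, ∀ q ∈ Q, p.Orthogonal q

/-- `P^⊥`, the maximal partition set orthogonal to `P`. -/
def orthCompl {n : ℕ} (P : Set (PartitionN n)) : Set (PartitionN n) :=
  {q | ∀ p ∈ P, p.Orthogonal q}

/-- The partition set of `⊗ⁿ` : the single partition of `{1,…,n}` into singleton classes. -/
def IsTensorSet {n : ℕ} (R : Set (PartitionN n)) : Prop :=
  R = {p : PartitionN n | ∀ c ∈ p.parts, c.card = 1}

/-- The partition set of `⅋ⁿ` : the single partition of `{1,…,n}` with one class. -/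
def IsParSet {n : ℕ} (R : Set (PartitionN n)) : Prop :=
  R = {p : PartitionN n | p.parts = {Finset.univ}}

/-!
The meeting graph `G(p,q)` is connected exactly when `∅` and the whole set are the only sets that
are unions of classes of both `p` and `q`; this turns every connectivity question about
partitions of `{0,1,2,3}` into a check over its 16 subsets. A partition orthogonal to both
pairings `01|23` and `02|13` has three classes, hence is one class `d` plus singletons, and `d`
has to cut both `{0,1}` and `{0,2}`: so `d = {0,3}` or `d = {1,2}`. Dually, a partition orthogonal
to `03|1|2` and `12|0|3` has two classes, each separating `0` from `3` and `1` from `2`.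
-/

open Finset

lemma SimpleGraph.Reachable.eq_of_forall_adj {V β : Type*} {G : SimpleGraph V} {f : V → β}
    (hf : ∀ u v, G.Adj u v → f u = f v) {u v : V} (h : G.Reachable u v) : f u = f v := by
  simpa [Relation.reflTransGen_eq_self] using ((G.reachable_iff_reflTransGen u v).1 h).lift f hf

def Saturates {α : Type*} (C : Finset (Finset α)) (S : Finset α) : Prop :=
  ∀ c ∈ C, c ⊆ S ∨ Disjoint c S

instance {α : Type*} [DecidableEq α] (C : Finset (Finset α)) : DecidablePred (Saturates C) :=
  fun S => inferInstanceAs (Decidable (∀ c ∈ C, c ⊆ S ∨ Disjoint c S))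

def withSingletons {α : Type*} [DecidableEq α] (s d : Finset α) : Finset (Finset α) :=
  insert d ((s \ d).image singleton)

section Saturates

variable {α : Type*} {C : Finset (Finset α)} {S c : Finset α}

lemma Saturates.subset_iff_mem (hS : Saturates C S) (hc : c ∈ C) {i : α} (hi : i ∈ c) :
    c ⊆ S ↔ i ∈ S :=
  ⟨fun h => h hi, fun h => (hS c hc).resolve_right fun hdisj => disjoint_left.1 hdisj hi h⟩

lemma saturates_of_forall_mem_imp (h : ∀ c ∈ C, ∀ i ∈ c, ∀ j ∈ c, i ∈ S → j ∈ S) :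
    Saturates C S := fun c hc => by
  refine or_iff_not_imp_right.2 fun hdisj => ?_
  obtain ⟨i, hic, hiS⟩ := not_disjoint_iff.1 hdisj
  exact fun j hj => h c hc i hic j hj hiS

lemma exists_one_lt_card_of_not_saturates (h : ¬ Saturates C S) : ∃ c ∈ C, 1 < c.card := by
  simp only [Saturates, not_forall, not_or, exists_prop] at h
  obtain ⟨c, hc, hsub, hdisj⟩ := h
  obtain ⟨i, hic, hiS⟩ := not_subset.1 hsub
  obtain ⟨j, hjc, hjS⟩ := not_disjoint_iff.1 hdisj
  exact ⟨c, hc, one_lt_card.2 ⟨i, hic, j, hjc, fun hij => hiS (hij ▸ hjS)⟩⟩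

end Saturates

namespace Finpartition

variable {α : Type*} [DecidableEq α] {s : Finset α} (P : Finpartition s) {c d : Finset α}

lemma saturates_parts_of_mem (hc : c ∈ P.parts) : Saturates P.parts c := fun c' hc' => by
  by_cases h : c' = c
  · exact .inl h.le
  · exact .inr (P.disjoint hc' hc h)

lemma ne_of_one_lt_card_parts (h : 1 < P.parts.card) (hc : c ∈ P.parts) : c ≠ s := by
  rintro rfl
  obtain ⟨d, hd, hdc⟩ := exists_mem_ne h c
  exact (P.nonempty_of_mem_parts hd).ne_empty
    ((disjoint_self_iff_empty _).1 ((P.disjoint hd hc hdc).mono_right (P.le hd)))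

lemma card_eq_one_of_card_parts_add_one (hP : P.parts.card + 1 = s.card) (hd : d ∈ P.parts)
    (hd1 : 1 < d.card) (hc : c ∈ P.parts) (hcd : c ≠ d) : c.card = 1 := by
  have hpos : ∀ e ∈ P.parts, 1 ≤ e.card := fun e he => card_pos.2 (P.nonempty_of_mem_parts he)
  have hsum : ∑ e ∈ P.parts, (e.card - 1) + P.parts.card = s.card := by
    rw [← P.sum_card_parts, card_eq_sum_ones, ← sum_add_distrib]
    exact sum_congr rfl fun e he => Nat.sub_add_cancel (hpos e he)
  have := add_le_sum (f := fun e => e.card - 1) (fun _ _ => Nat.zero_le _) hc hd hcd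
  have := hpos c hc
  omega

lemma parts_eq_withSingletons (hd : d ∈ P.parts)
    (h : ∀ c ∈ P.parts, c ≠ d → c.card = 1) :
    P.parts = withSingletons s d := by
  ext c
  simp only [withSingletons, mem_insert, mem_image, mem_sdiff]
  constructor
  · intro hc
    by_cases hcd : c = d
    · exact .inl hcd
    obtain ⟨i, rfl⟩ := card_eq_one.1 (h c hc hcd)
    exact .inr ⟨i, ⟨P.le hc (mem_singleton_self i),
      disjoint_singleton_left.1 (P.disjoint hc hd hcd)⟩, rfl⟩
  · rintro (rfl | ⟨i, ⟨his, hid⟩, rfl⟩)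
    · exact hd
    have hpart := P.part_mem.2 his
    have hne : P.part i ≠ d := fun he => hid (he ▸ P.mem_part_self.2 his)
    obtain ⟨j, hj⟩ := card_eq_one.1 (h _ hpart hne)
    have hij : i = j := mem_singleton.1 (hj ▸ P.mem_part_self.2 his)
    rwa [hij, ← hj]

end Finpartition

section MeetingGraph

variable {n : ℕ} {p q : PartitionN n}

@[simp]
lemma meetingGraph_adj_inl_inr {c : {c // c ∈ p.parts}} {d : {d // d ∈ q.parts}} :
    (meetingGraph p q).Adj (.inl c) (.inr d) ↔ ((c : Finset (Fin n)) ∩ d).Nonempty := by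
  simp [meetingGraph]

@[simp]
lemma meetingGraph_adj_inr_inl {c : {c // c ∈ p.parts}} {d : {d // d ∈ q.parts}} :
    (meetingGraph p q).Adj (.inr d) (.inl c) ↔ ((c : Finset (Fin n)) ∩ d).Nonempty := by
  simp [meetingGraph]

@[simp]
lemma not_meetingGraph_adj_inl_inl {c c' : {c // c ∈ p.parts}} :
    ¬ (meetingGraph p q).Adj (.inl c) (.inl c') := by
  simp [meetingGraph]

@[simp]
lemma not_meetingGraph_adj_inr_inr {d d' : {d // d ∈ q.parts}} :
    ¬ (meetingGraph p q).Adj (.inr d) (.inr d') := by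
  simp [meetingGraph]

def meetingGraphComm (p q : PartitionN n) : meetingGraph p q ≃g meetingGraph q p where
  toEquiv := Equiv.sumComm _ _
  map_rel_iff' := by rintro (c | d) (c' | d') <;> simp [inter_comm]

lemma Finpartition.Orthogonal.symm (h : p.Orthogonal q) : q.Orthogonal p :=
  ⟨(meetingGraphComm p q).connected_iff.1 h.1, by rw [h.2, add_comm]⟩

end MeetingGraph

section Saturation

variable {n : ℕ} {p q : PartitionN n}

def partVertex (p q : PartitionN n) (k : Fin n) : {c // c ∈ p.parts} ⊕ {d // d ∈ q.parts} :=
  .inl ⟨p.part k, p.part_mem.2 (mem_univ k)⟩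

lemma partVertex_eq {c : Finset (Fin n)} (hc : c ∈ p.parts) {k : Fin n} (hk : k ∈ c) :
    partVertex p q k = .inl ⟨c, hc⟩ := by
  simp only [partVertex, p.part_eq_of_mem hc hk]

lemma partVertex_adj {d : Finset (Fin n)} (hd : d ∈ q.parts) {k : Fin n} (hk : k ∈ d) :
    (meetingGraph p q).Adj (partVertex p q k) (.inr ⟨d, hd⟩) :=
  meetingGraph_adj_inl_inr.2 ⟨k, mem_inter.2 ⟨p.mem_part_self.2 (mem_univ k), hk⟩⟩

lemma eq_empty_or_eq_univ_of_connected (h : (meetingGraph p q).Connected) {S : Finset (Fin n)}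
    (hp : Saturates p.parts S) (hq : Saturates q.parts S) : S = ∅ ∨ S = univ := by
  let f : {c // c ∈ p.parts} ⊕ {d // d ∈ q.parts} → Prop :=
    Sum.elim (fun c => c.1 ⊆ S) (fun d => d.1 ⊆ S)
  have hf : ∀ u v, (meetingGraph p q).Adj u v → f u = f v := by
    rintro (c | d) (c' | d') huv <;>
      simp only [meetingGraph_adj_inl_inr, meetingGraph_adj_inr_inl,
        not_meetingGraph_adj_inl_inl, not_meetingGraph_adj_inr_inr] at huv
    · obtain ⟨i, hi⟩ := huv
      exact propext <| (hp.subset_iff_mem c.2 (mem_inter.1 hi).1).trans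
        (hq.subset_iff_mem d'.2 (mem_inter.1 hi).2).symm
    · obtain ⟨i, hi⟩ := huv
      exact propext <| (hq.subset_iff_mem d.2 (mem_inter.1 hi).2).trans
        (hp.subset_iff_mem c'.2 (mem_inter.1 hi).1).symm
  by_contra! hS
  obtain ⟨i, hi⟩ := hS.1
  obtain ⟨j, -, hj⟩ := exists_of_ssubset (ssubset_univ_iff.2 hS.2)
  have hpart (k : Fin n) : f (partVertex p q k) = (k ∈ S) :=
    propext (hp.subset_iff_mem (p.part_mem.2 (mem_univ k)) (p.mem_part_self.2 (mem_univ k)))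
  have := (h.preconnected (partVertex p q i) (partVertex p q j)).eq_of_forall_adj hf
  rw [hpart i, hpart j] at this
  exact hj (this ▸ hi)

lemma connected_of_saturates [NeZero n]
    (h : ∀ S, Saturates p.parts S → Saturates q.parts S → S = ∅ ∨ S = univ) :
    (meetingGraph p q).Connected := by
  classical
  let S := univ.filter fun k =>
    (meetingGraph p q).Reachable (partVertex p q 0) (partVertex p q k)
  have hS : S = univ := by
    refine (h S (saturates_of_forall_mem_imp ?_) (saturates_of_forall_mem_imp ?_)).resolve_left
      (ne_empty_of_mem (a := 0) (by simp [S]))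
    · intro c hc i hi j hj hiS
      simpa [S, partVertex_eq hc hi, partVertex_eq hc hj] using hiS
    · intro d hd i hi j hj hiS
      simp only [S, mem_filter, mem_univ, true_and] at hiS ⊢
      exact hiS.trans
        ((partVertex_adj hd hi).reachable.trans (partVertex_adj hd hj).reachable.symm)
  have reach_vert (k : Fin n) :
      (meetingGraph p q).Reachable (partVertex p q 0) (partVertex p q k) := by
    have hk : k ∈ S := hS ▸ mem_univ k
    simpa [S] using hk
  have reach : ∀ u, (meetingGraph p q).Reachable (partVertex p q 0) u := by
    rintro (⟨c, hc⟩ | ⟨d, hd⟩)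
    · obtain ⟨k, hk⟩ := p.nonempty_of_mem_parts hc
      exact partVertex_eq hc hk ▸ reach_vert k
    · obtain ⟨k, hk⟩ := q.nonempty_of_mem_parts hd
      exact (reach_vert k).trans (partVertex_adj hd hk).reachable
  exact (SimpleGraph.connected_iff _).2
    ⟨fun u v => (reach u).symm.trans (reach v), ⟨partVertex p q 0⟩⟩

end Saturation

lemma not_saturates_of_mem_parts {n : ℕ} {p q : PartitionN n} {c : Finset (Fin n)}
    (h : (meetingGraph p q).Connected) (hc : c ∈ p.parts) (hp : 1 < p.parts.card) :
    ¬ Saturates q.parts c := fun hq =>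
  (eq_empty_or_eq_univ_of_connected h (p.saturates_parts_of_mem hc) hq).elim
    (p.nonempty_of_mem_parts hc).ne_empty (p.ne_of_one_lt_card_parts hp hc)

lemma withSingletons_eq_of_not_saturates : ∀ d : Finset (Fin 4),
    (withSingletons univ d).card = 3 →
    ¬ Saturates (withSingletons univ d) {0, 1} →
    ¬ Saturates (withSingletons univ d) {0, 2} →
    withSingletons univ d = {{0, 3}, {1}, {2}} ∨
      withSingletons univ d = {{1, 2}, {0}, {3}} := by
  decide

lemma pair_eq_of_not_saturates : ∀ A B : Finset (Fin 4), A ∪ B = univ →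
    (¬ Saturates {{0, 3}, {1}, {2}} A ∧ ¬ Saturates {{1, 2}, {0}, {3}} A) →
    (¬ Saturates {{0, 3}, {1}, {2}} B ∧ ¬ Saturates {{1, 2}, {0}, {3}} B) →
    ({A, B} : Finset (Finset (Fin 4))) = {{0, 1}, {2, 3}} ∨
      ({A, B} : Finset (Finset (Fin 4))) = {{0, 2}, {1, 3}} := by
  decide

lemma parts_eq_of_orthogonal_pairings {p₁ p₂ q : PartitionN 4}
    (hp₁ : p₁.parts = {{0, 1}, {2, 3}}) (hp₂ : p₂.parts = {{0, 2}, {1, 3}})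
    (h₁ : p₁.Orthogonal q) (h₂ : p₂.Orthogonal q) :
    q.parts = {{0, 3}, {1}, {2}} ∨ q.parts = {{1, 2}, {0}, {3}} := by
  have hcard : q.parts.card = 3 := by
    have h := h₁.2
    rw [hp₁, card_pair (by decide)] at h
    omega
  have h01 : ¬ Saturates q.parts {0, 1} :=
    not_saturates_of_mem_parts h₁.1 (by simp [hp₁]) (by rw [hp₁]; decide)
  have h02 : ¬ Saturates q.parts {0, 2} :=
    not_saturates_of_mem_parts h₂.1 (by simp [hp₂]) (by rw [hp₂]; decide)
  obtain ⟨d, hd, hd1⟩ := exists_one_lt_card_of_not_saturates h01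
  have hq : q.parts = withSingletons univ d :=
    q.parts_eq_withSingletons hd fun c hc hcd =>
      q.card_eq_one_of_card_parts_add_one (by simp [hcard]) hd hd1 hc hcd
  rw [hq] at hcard h01 h02 ⊢
  exact withSingletons_eq_of_not_saturates d hcard h01 h02

lemma parts_eq_of_orthogonal_pair_singletons {q₁ q₂ p : PartitionN 4}
    (hq₁ : q₁.parts = {{0, 3}, {1}, {2}}) (hq₂ : q₂.parts = {{1, 2}, {0}, {3}})
    (h₁ : q₁.Orthogonal p) (h₂ : q₂.Orthogonal p) :
    p.parts = {{0, 1}, {2, 3}} ∨ p.parts = {{0, 2}, {1, 3}} := by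
  have hcard : p.parts.card = 2 := by
    have h := h₁.2
    rw [hq₁, (by decide : ({{0, 3}, {1}, {2}} : Finset (Finset (Fin 4))).card = 3)] at h
    omega
  have hsep (c) (hc : c ∈ p.parts) :
      ¬ Saturates {{0, 3}, {1}, {2}} c ∧ ¬ Saturates {{1, 2}, {0}, {3}} c :=
    ⟨hq₁ ▸ not_saturates_of_mem_parts h₁.symm.1 hc (by omega),
      hq₂ ▸ not_saturates_of_mem_parts h₂.symm.1 hc (by omega)⟩
  obtain ⟨A, B, -, hAB⟩ := card_eq_two.1 hcard
  have hcover : A ∪ B = univ := by simpa [hAB] using p.sup_parts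
  rw [hAB] at hsep ⊢
  exact pair_eq_of_not_saturates A B hcover (hsep A (by simp)) (hsep B (by simp))

/-- **The Danos–Regnier 4-ary non-decomposable connective is a dual pair.**
Let `P = {{(1,2),(3,4)}, {(1,3),(2,4)}}` and `Q = {{(1,4),(2),(3)}, {(2,3),(1),(4)}}`
(written with `0`-based indices).  Then `P ⊥ Q`, `P^⊥ = Q` and `Q^⊥ = P`, so `(P, Q)`
forms a pair of 4-ary generalized connectives `(C, C*)`. -/
theorem danos_regnier_four_ary_dual_pair
    (p₁ p₂ q₁ q₂ : PartitionN 4)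
    (hp₁ : p₁.parts = {({0, 1} : Finset (Fin 4)), {2, 3}})
    (hp₂ : p₂.parts = {({0, 2} : Finset (Fin 4)), {1, 3}})
    (hq₁ : q₁.parts = {({0, 3} : Finset (Fin 4)), {1}, {2}})
    (hq₂ : q₂.parts = {({1, 2} : Finset (Fin 4)), {0}, {3}}) :
    orthSet {p₁, p₂} {q₁, q₂} ∧
    orthCompl {p₁, p₂} = {q₁, q₂} ∧
    orthCompl {q₁, q₂} = {p₁, p₂} := by
  have orth : orthSet {p₁, p₂} {q₁, q₂} := by
    rintro p (rfl | rfl) q (rfl | rfl) <;>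
      refine ⟨connected_of_saturates ?_, ?_⟩ <;> simp only [hp₁, hp₂, hq₁, hq₂] <;> decide
  refine ⟨orth, ?_, ?_⟩
  · refine Set.Subset.antisymm (fun q hq => ?_) fun q hq p hp => orth p hp q hq
    rcases parts_eq_of_orthogonal_pairings hp₁ hp₂ (hq p₁ (by simp)) (hq p₂ (by simp))
      with h | h
    exacts [.inl (Finpartition.ext (h.trans hq₁.symm)),
      .inr (Finpartition.ext (h.trans hq₂.symm))]
  · refine Set.Subset.antisymm (fun p hp => ?_) fun p hp q hq => (orth p hp q hq).symm
    rcases parts_eq_of_orthogonal_pair_singletons hq₁ hq₂ (hp q₁ (by simp)) (hp q₂ (by simp))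
      with h | h
    exacts [.inl (Finpartition.ext (h.trans hp₁.symm)),
      .inr (Finpartition.ext (h.trans hp₂.symm))]
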